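/- arXiv:1710.05907 — 2 statements merged into one kernel-verified Lean document; each statement's English description precedes it below -/
import Mathlib

section
/- Let Ω ⊆ ℝ⁴ be open with coordinates (t,x,y,z), and let u : Ω → ℝ be smooth with u_x ≠ 0 on Ω and satisfying G[u] = 0 on Ω. Let U : Ω → ℝ be smooth with ℓ_G(U) = 0 on Ω, and let Ũ : Ω → ℝ be smooth and satisfy on Ω the two relations Ũ_z − (u_{xz}/u_x) Ũ = U_t − (u_t/u_x) U_x and Ũ_x − (u_{xx}/u_x) Ũ = U_y − (u_y/u_x) U_x. Then ℓ_G(Ũ) = 0 on Ω; that is, these relations define a recursion operator mapping symmetries of the equation D_z(u_y/u_x) − D_x(u_t/u_x) = 0 to symmetries. -/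
/- Coordinates on ℝ⁴: t = 0, x = 1, y = 2, z = 3. -/

/-- Partial derivative of `f` in the `i`-th coordinate direction. -/
noncomputable def pd (i : Fin 4) (f : (Fin 4 → ℝ) → ℝ) (p : Fin 4 → ℝ) : ℝ :=
  fderiv ℝ f p (Pi.single i 1)

/-- The four-dimensional equation
`G[u] = u_x u_{yz} − u_y u_{xz} − u_x u_{xt} + u_t u_{xx}`. -/
noncomputable def Gop (u : (Fin 4 → ℝ) → ℝ) (p : Fin 4 → ℝ) : ℝ :=
  pd 1 u p * pd 2 (pd 3 u) p - pd 2 u p * pd 1 (pd 3 u) p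
    - pd 1 u p * pd 1 (pd 0 u) p + pd 0 u p * pd 1 (pd 1 u) p

/-- The linearization `ℓ_G(W)` of `G` at `u`, applied to `W`. -/
noncomputable def ellG (u W : (Fin 4 → ℝ) → ℝ) (p : Fin 4 → ℝ) : ℝ :=
  pd 1 W p * pd 2 (pd 3 u) p + pd 1 u p * pd 2 (pd 3 W) p
    - pd 2 W p * pd 1 (pd 3 u) p - pd 2 u p * pd 1 (pd 3 W) p
    - pd 1 W p * pd 1 (pd 0 u) p - pd 1 u p * pd 1 (pd 0 W) p
    + pd 0 W p * pd 1 (pd 1 u) p + pd 0 u p * pd 1 (pd 1 W) p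


/-!
Write the two relations in product form,
`u_x Ũ_z − u_{xz} Ũ = u_x U_t − u_t U_x` and `u_x Ũ_x − u_{xx} Ũ = u_x U_y − u_y U_x`.
Differentiating the first in `y` and the second in `z`, `t` and `x` expresses every second
derivative of `Ũ` occurring in `ℓ_G(Ũ)` through derivatives of `u` and `U`. After these
substitutions (and symmetry of mixed partials), `u_x² ℓ_G(Ũ)` becomes a combination of
`ℓ_G(U)`, of `G[u]` and its `x`-derivative, and of the relations themselves, all of which
vanish; since `u_x ≠ 0`, so does `ℓ_G(Ũ)`.
-/

open Set

theorem mul_sub_mul_eq_of_sub_div_mul_eq {K : Type*} [Field K] {a b c d e f g : K}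
    (hc : c ≠ 0) (h : a - b / c * d = e - f / c * g) : c * a - b * d = c * e - f * g := by
  field_simp at h
  linear_combination h

section PartialDerivatives

variable {Ω : Set (Fin 4 → ℝ)} {f g : (Fin 4 → ℝ) → ℝ} {p : Fin 4 → ℝ}

theorem pd_mul (i : Fin 4) (hf : DifferentiableAt ℝ f p) (hg : DifferentiableAt ℝ g p) :
    pd i (fun q => f q * g q) p = pd i f p * g p + f p * pd i g p := by
  simp [pd, fderiv_fun_mul hf hg]
  ring

theorem pd_sub (i : Fin 4) (hf : DifferentiableAt ℝ f p) (hg : DifferentiableAt ℝ g p) :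
    pd i (fun q => f q - g q) p = pd i f p - pd i g p := by
  simp [pd, fderiv_fun_sub hf hg]

theorem pd_congr_of_eqOn (hΩ : IsOpen Ω) (h : EqOn f g Ω) (hp : p ∈ Ω) (i : Fin 4) :
    pd i f p = pd i g p := by
  rw [pd, (Filter.eventuallyEq_of_mem (hΩ.mem_nhds hp) h).fderiv_eq, pd]

theorem ContDiffOn.pd_of_isOpen (hf : ContDiffOn ℝ (⊤ : ℕ∞) f Ω) (hΩ : IsOpen Ω) (i : Fin 4) :
    ContDiffOn ℝ (⊤ : ℕ∞) (pd i f) Ω :=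
  (hf.fderiv_of_isOpen hΩ le_rfl).clm_apply contDiffOn_const

theorem ContDiffOn.differentiableAt_of_isOpen (hf : ContDiffOn ℝ (⊤ : ℕ∞) f Ω)
    (hΩ : IsOpen Ω) (hp : p ∈ Ω) : DifferentiableAt ℝ f p :=
  (hf.differentiableOn (by simp)).differentiableAt (hΩ.mem_nhds hp)

theorem pd_comm (hf : ContDiffOn ℝ (⊤ : ℕ∞) f Ω) (hΩ : IsOpen Ω) (hp : p ∈ Ω) (i j : Fin 4) :
    pd i (pd j f) p = pd j (pd i f) p := by
  have hf_at : ContDiffAt ℝ (⊤ : ℕ∞) f p := hf.contDiffAt (hΩ.mem_nhds hp)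
  have hsymm : IsSymmSndFDerivAt ℝ f p :=
    hf_at.isSymmSndFDerivAt (by
      rw [minSmoothness_of_isRCLikeNormedField]; exact WithTop.coe_le_coe.mpr le_top)
  have hdf : DifferentiableAt ℝ (fderiv ℝ f) p :=
    (hf_at.fderiv_right (m := 1) (WithTop.coe_le_coe.mpr le_top)).differentiableAt one_ne_zero
  have pd_pd : ∀ k l : Fin 4, pd k (pd l f) p = fderiv ℝ (fderiv ℝ f) p (Pi.single k 1)
      (Pi.single l 1) := fun k l => by
    change fderiv ℝ (fun q => fderiv ℝ f q (Pi.single l 1)) p (Pi.single k 1) = _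
    simp [fderiv_clm_apply hdf (differentiableAt_const _)]
  rw [pd_pd, pd_pd, hsymm]

theorem pd_pd_pd_comm (hf : ContDiffOn ℝ (⊤ : ℕ∞) f Ω) (hΩ : IsOpen Ω) (hp : p ∈ Ω)
    (i j k : Fin 4) : pd i (pd j (pd k f)) p = pd j (pd k (pd i f)) p := by
  rw [pd_comm (hf.pd_of_isOpen hΩ k) hΩ hp i j]
  exact pd_congr_of_eqOn hΩ (fun q hq => pd_comm hf hΩ hq i k) hp j

theorem pd_of_mul_sub_mul_eqOn (hΩ : IsOpen Ω) {a b c d e f g h : (Fin 4 → ℝ) → ℝ}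
    (ha : DifferentiableAt ℝ a p) (hb : DifferentiableAt ℝ b p)
    (hc : DifferentiableAt ℝ c p) (hd : DifferentiableAt ℝ d p)
    (he : DifferentiableAt ℝ e p) (hf : DifferentiableAt ℝ f p)
    (hg : DifferentiableAt ℝ g p) (hh : DifferentiableAt ℝ h p)
    (heq : ∀ q ∈ Ω, a q * b q - c q * d q = e q * f q - g q * h q) (hp : p ∈ Ω) (i : Fin 4) :
    pd i a p * b p + a p * pd i b p - (pd i c p * d p + c p * pd i d p)
      = pd i e p * f p + e p * pd i f p - (pd i g p * h p + g p * pd i h p) := by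
  have hpd := pd_congr_of_eqOn hΩ heq hp i
  rwa [pd_sub (f := fun q => a q * b q) (g := fun q => c q * d q) i (ha.mul hb) (hc.mul hd),
    pd_sub (f := fun q => e q * f q) (g := fun q => g q * h q) i (he.mul hf) (hg.mul hh),
    pd_mul i ha hb, pd_mul i hc hd, pd_mul i he hf, pd_mul i hg hh] at hpd

end PartialDerivatives

theorem Gop_eq_zero_iff {u : (Fin 4 → ℝ) → ℝ} {p : Fin 4 → ℝ} :
    Gop u p = 0 ↔ pd 1 u p * pd 2 (pd 3 u) p - pd 2 u p * pd 1 (pd 3 u) p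
      = pd 1 u p * pd 1 (pd 0 u) p - pd 0 u p * pd 1 (pd 1 u) p := by
  rw [Gop]
  constructor <;> intro h <;> linear_combination h

theorem sq_pd_mul_ellG_eq_zero {Ω : Set (Fin 4 → ℝ)} (hΩ : IsOpen Ω)
    {u U Ut : (Fin 4 → ℝ) → ℝ} (hu : ContDiffOn ℝ (⊤ : ℕ∞) u Ω)
    (hU : ContDiffOn ℝ (⊤ : ℕ∞) U Ω) (hUt : ContDiffOn ℝ (⊤ : ℕ∞) Ut Ω)
    (hG : ∀ q ∈ Ω, pd 1 u q * pd 2 (pd 3 u) q - pd 2 u q * pd 1 (pd 3 u) q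
      = pd 1 u q * pd 1 (pd 0 u) q - pd 0 u q * pd 1 (pd 1 u) q)
    (hrel1 : ∀ q ∈ Ω, pd 1 u q * pd 3 Ut q - pd 1 (pd 3 u) q * Ut q
      = pd 1 u q * pd 0 U q - pd 0 u q * pd 1 U q)
    (hrel2 : ∀ q ∈ Ω, pd 1 u q * pd 1 Ut q - pd 1 (pd 1 u) q * Ut q
      = pd 1 u q * pd 2 U q - pd 2 u q * pd 1 U q)
    {p : Fin 4 → ℝ} (hp : p ∈ Ω) (hsym : ellG u U p = 0) :
    pd 1 u p ^ 2 * ellG u Ut p = 0 := by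
  have du i := (hu.pd_of_isOpen hΩ i).differentiableAt_of_isOpen hΩ hp
  have du₂ i j := ((hu.pd_of_isOpen hΩ j).pd_of_isOpen hΩ i).differentiableAt_of_isOpen hΩ hp
  have dU i := (hU.pd_of_isOpen hΩ i).differentiableAt_of_isOpen hΩ hp
  have dUt i := (hUt.pd_of_isOpen hΩ i).differentiableAt_of_isOpen hΩ hp
  have dUt₀ := hUt.differentiableAt_of_isOpen hΩ hp
  have hy_rel1 := pd_of_mul_sub_mul_eqOn hΩ (du 1) (dUt 3) (du₂ 1 3) dUt₀ (du 1) (dU 0) (du 0)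
    (dU 1) hrel1 hp 2
  have hz_rel2 := pd_of_mul_sub_mul_eqOn hΩ (du 1) (dUt 1) (du₂ 1 1) dUt₀ (du 1) (dU 2) (du 2)
    (dU 1) hrel2 hp 3
  have ht_rel2 := pd_of_mul_sub_mul_eqOn hΩ (du 1) (dUt 1) (du₂ 1 1) dUt₀ (du 1) (dU 2) (du 2)
    (dU 1) hrel2 hp 0
  have hx_rel2 := pd_of_mul_sub_mul_eqOn hΩ (du 1) (dUt 1) (du₂ 1 1) dUt₀ (du 1) (dU 2) (du 2)
    (dU 1) hrel2 hp 1
  have hx_G := pd_of_mul_sub_mul_eqOn hΩ (du 1) (du₂ 2 3) (du 2) (du₂ 1 3) (du 1) (du₂ 1 0)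
    (du 0) (du₂ 1 1) hG hp 1
  rw [pd_comm hu hΩ hp 2 1, pd_comm (hu.pd_of_isOpen hΩ 3) hΩ hp 2 1, pd_comm hu hΩ hp 2 0,
    pd_comm hU hΩ hp 2 0, pd_comm hU hΩ hp 2 1] at hy_rel1
  rw [pd_comm hu hΩ hp 3 1, pd_pd_pd_comm hu hΩ hp 3 1 1, pd_comm hu hΩ hp 3 2,
    pd_comm hU hΩ hp 3 2, pd_comm hU hΩ hp 3 1, pd_comm hUt hΩ hp 3 1] at hz_rel2
  rw [pd_comm hu hΩ hp 0 1, pd_pd_pd_comm hu hΩ hp 0 1 1, pd_comm hU hΩ hp 0 1,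
    pd_comm hUt hΩ hp 0 1] at ht_rel2
  rw [ellG] at hsym ⊢
  linear_combination (pd 1 u p ^ 2) * hy_rel1 - (pd 1 u p * pd 2 u p) * hz_rel2
    - (pd 1 u p ^ 2) * ht_rel2 + (pd 0 u p * pd 1 u p) * hx_rel2
    + (pd 1 u p * Ut p) * hx_G
    + (pd 1 u p * pd 2 (pd 3 u) p + pd 2 u p * pd 1 (pd 3 u) p) * hrel2 p hp
    - (pd 1 u p * pd 1 (pd 2 u) p + pd 2 u p * pd 1 (pd 1 u) p) * hrel1 p hp
    - (pd 1 u p * pd 2 u p) * hsym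
    + (pd 1 U p * pd 2 u p + pd 2 U p * pd 1 u p) * hG p hp

theorem recursion_operator_dfk_four_dim
    (Ω : Set (Fin 4 → ℝ)) (hΩ : IsOpen Ω)
    (u U Ut : (Fin 4 → ℝ) → ℝ)
    (hu : ContDiffOn ℝ (⊤ : ℕ∞) u Ω)
    (hU : ContDiffOn ℝ (⊤ : ℕ∞) U Ω)
    (hUt : ContDiffOn ℝ (⊤ : ℕ∞) Ut Ω)
    (hux : ∀ p ∈ Ω, pd 1 u p ≠ 0)
    (hG : ∀ p ∈ Ω, Gop u p = 0)
    (hsym : ∀ p ∈ Ω, ellG u U p = 0)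
    -- Ũ_z − (u_{xz}/u_x) Ũ = U_t − (u_t/u_x) U_x
    (hrel1 : ∀ p ∈ Ω,
      pd 3 Ut p - (pd 1 (pd 3 u) p / pd 1 u p) * Ut p =
        pd 0 U p - (pd 0 u p / pd 1 u p) * pd 1 U p)
    -- Ũ_x − (u_{xx}/u_x) Ũ = U_y − (u_y/u_x) U_x
    (hrel2 : ∀ p ∈ Ω,
      pd 1 Ut p - (pd 1 (pd 1 u) p / pd 1 u p) * Ut p =
        pd 2 U p - (pd 2 u p / pd 1 u p) * pd 1 U p) :
    ∀ p ∈ Ω, ellG u Ut p = 0 := by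
  intro p hp
  have key := sq_pd_mul_ellG_eq_zero hΩ hu hU hUt (fun q hq => Gop_eq_zero_iff.mp (hG q hq))
    (fun q hq => mul_sub_mul_eq_of_sub_div_mul_eq (hux q hq) (hrel1 q hq))
    (fun q hq => mul_sub_mul_eq_of_sub_div_mul_eq (hux q hq) (hrel2 q hq)) hp (hsym p hp)
  exact (mul_eq_zero.mp key).resolve_left (pow_ne_zero 2 (hux p hp))
end

section
/- Let Ω ⊆ ℝ⁴ be open with coordinates (t,x,y,z), let u : Ω → ℝ be smooth with u_x ≠ 0 on Ω and G[u] = 0 on Ω, and let U : Ω → ℝ be smooth with ℓ_G(U) = 0 on Ω. Define R₁ := U_t − (u_t/u_x) U_x and R₂ := U_y − (u_y/u_x) U_x. Then the identity ∂_x(R₁) − ∂_z(R₂) = (u_{xx}/u_x) R₁ − (u_{xz}/u_x) R₂ holds at every point of Ω; consequently the system Ũ_z = (u_{xz}/u_x) Ũ + R₁, Ũ_x = (u_{xx}/u_x) Ũ + R₂ defining the recursion operator satisfies the cross-derivative (Frobenius) compatibility condition whenever U is a symmetry. -/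
/-- `R₁ = U_t − (u_t/u_x) U_x`. -/
noncomputable def R₁ (u U : (Fin 4 → ℝ) → ℝ) (p : Fin 4 → ℝ) : ℝ :=
  pd 0 U p - (pd 0 u p / pd 1 u p) * pd 1 U p

/-- `R₂ = U_y − (u_y/u_x) U_x`. -/
noncomputable def R₂ (u U : (Fin 4 → ℝ) → ℝ) (p : Fin 4 → ℝ) : ℝ :=
  pd 2 U p - (pd 2 u p / pd 1 u p) * pd 1 U p

/-!
Expanding `∂_x R₁` and `∂_z R₂` by the quotient rule and using the symmetry of second partial
derivatives, one finds the exact identity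
`u_x² (∂_x R₁ − ∂_z R₂ − a₂ R₁ + a₁ R₂) = 2 U_x G[u] − u_x ℓ_G(U)`,
whose right-hand side vanishes when `G[u] = 0` and `U` is a symmetry.
-/

section PartialDerivatives

variable {f : (Fin 4 → ℝ) → ℝ} {p : Fin 4 → ℝ}

lemma differentiableAt_pd (hf : ContDiffAt ℝ 2 f p) (j : Fin 4) :
    DifferentiableAt ℝ (pd j f) p :=
  ((hf.fderiv_right (m := 1) (by norm_num)).clm_apply contDiffAt_const).differentiableAt
    (by norm_num)

lemma pd_pd_eq_fderiv_fderiv (hf : ContDiffAt ℝ 2 f p) (i j : Fin 4) :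
    pd i (pd j f) p = fderiv ℝ (fderiv ℝ f) p (Pi.single i 1) (Pi.single j 1) := by
  have hdf : DifferentiableAt ℝ (fderiv ℝ f) p :=
    (hf.fderiv_right (m := 1) (by norm_num)).differentiableAt (by norm_num)
  change fderiv ℝ (fun q => fderiv ℝ f q (Pi.single j 1)) p (Pi.single i 1) = _
  rw [fderiv_clm_apply hdf (differentiableAt_const _)]
  simp

lemma pd_pd_comm (hf : ContDiffAt ℝ 2 f p) (i j : Fin 4) :
    pd i (pd j f) p = pd j (pd i f) p := by
  rw [pd_pd_eq_fderiv_fderiv hf, pd_pd_eq_fderiv_fderiv hf]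
  exact hf.isSymmSndFDerivAt (by simp [minSmoothness_of_isRCLikeNormedField]) _ _

lemma pd_sub_div_mul (i : Fin 4) {g h k : (Fin 4 → ℝ) → ℝ}
    (hf : DifferentiableAt ℝ f p) (hg : DifferentiableAt ℝ g p)
    (hh : DifferentiableAt ℝ h p) (hk : DifferentiableAt ℝ k p) (h0 : h p ≠ 0) :
    pd i (fun q => f q - g q / h q * k q) p
      = pd i f p - (pd i g p * h p - g p * pd i h p) / h p ^ 2 * k p
        - g p / h p * pd i k p := by
  have hinv : HasFDerivAt (fun q => (h q)⁻¹) (-(h p ^ 2)⁻¹ • fderiv ℝ h p) p :=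
    (hasDerivAt_inv h0).comp_hasFDerivAt p hh.hasFDerivAt
  have hF := hf.hasFDerivAt.fun_sub ((hg.hasFDerivAt.fun_mul hinv).fun_mul hk.hasFDerivAt)
  simp only [div_eq_mul_inv]
  rw [pd, hF.fderiv]
  simp only [pd, sub_apply, add_apply, smul_apply, smul_eq_mul]
  field_simp
  ring

end PartialDerivatives

/-- The Frobenius compatibility defect `∂_x R₁ − ∂_z R₂ − (a₂ R₁ − a₁ R₂)` of the recursion
system. -/
noncomputable def frobeniusDefect (u U : (Fin 4 → ℝ) → ℝ) (p : Fin 4 → ℝ) : ℝ :=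
  pd 1 (R₁ u U) p - pd 3 (R₂ u U) p
    - (pd 1 (pd 1 u) p / pd 1 u p * R₁ u U p - pd 1 (pd 3 u) p / pd 1 u p * R₂ u U p)

lemma frobeniusDefect_eq {u U : (Fin 4 → ℝ) → ℝ} {p : Fin 4 → ℝ}
    (hu : ContDiffAt ℝ 2 u p) (hU : ContDiffAt ℝ 2 U p) (hux : pd 1 u p ≠ 0) :
    frobeniusDefect u U p
      = (2 * pd 1 U p * Gop u p - pd 1 u p * ellG u U p) / pd 1 u p ^ 2 := by
  have hR₁ : pd 1 (R₁ u U) p = pd 1 (pd 0 U) p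
      - (pd 1 (pd 0 u) p * pd 1 u p - pd 0 u p * pd 1 (pd 1 u) p) / pd 1 u p ^ 2 * pd 1 U p
      - pd 0 u p / pd 1 u p * pd 1 (pd 1 U) p :=
    pd_sub_div_mul 1 (differentiableAt_pd hU 0) (differentiableAt_pd hu 0)
      (differentiableAt_pd hu 1) (differentiableAt_pd hU 1) hux
  have hR₂ : pd 3 (R₂ u U) p = pd 3 (pd 2 U) p
      - (pd 3 (pd 2 u) p * pd 1 u p - pd 2 u p * pd 3 (pd 1 u) p) / pd 1 u p ^ 2 * pd 1 U p
      - pd 2 u p / pd 1 u p * pd 3 (pd 1 U) p :=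
    pd_sub_div_mul 3 (differentiableAt_pd hU 2) (differentiableAt_pd hu 2)
      (differentiableAt_pd hu 1) (differentiableAt_pd hU 1) hux
  rw [frobeniusDefect, hR₁, hR₂, pd_pd_comm hU 3 2, pd_pd_comm hu 3 2, pd_pd_comm hu 3 1,
    pd_pd_comm hU 3 1, R₁, R₂, Gop, ellG]
  field_simp
  ring

/-- Frobenius compatibility of the recursion system:
`∂_x(R₁) − ∂_z(R₂) = (u_{xx}/u_x) R₁ − (u_{xz}/u_x) R₂` on `Ω`. -/
theorem recursion_system_compatible_dfk_four_dim
    (Ω : Set (Fin 4 → ℝ)) (hΩ : IsOpen Ω)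
    (u U : (Fin 4 → ℝ) → ℝ)
    (hu : ContDiffOn ℝ (⊤ : ℕ∞) u Ω)
    (hU : ContDiffOn ℝ (⊤ : ℕ∞) U Ω)
    (hux : ∀ p ∈ Ω, pd 1 u p ≠ 0)
    (hG : ∀ p ∈ Ω, Gop u p = 0)
    (hsym : ∀ p ∈ Ω, ellG u U p = 0) :
    ∀ p ∈ Ω,
      pd 1 (R₁ u U) p - pd 3 (R₂ u U) p =
        (pd 1 (pd 1 u) p / pd 1 u p) * R₁ u U p
          - (pd 1 (pd 3 u) p / pd 1 u p) * R₂ u U p := by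
  intro p hp
  have h2 : (2 : WithTop ℕ∞) ≤ (⊤ : ℕ∞) := WithTop.coe_le_coe.mpr le_top
  have hdefect := frobeniusDefect_eq ((hu.contDiffAt (hΩ.mem_nhds hp)).of_le h2)
    ((hU.contDiffAt (hΩ.mem_nhds hp)).of_le h2) (hux p hp)
  rw [hG p hp, hsym p hp, mul_zero, mul_zero, sub_zero, zero_div] at hdefect
  exact sub_eq_zero.mp hdefect
end
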